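/- Let p be a prime and s ≥ 1 an integer, and regard M(p^s) as a matrix over ℚ. Then M(p^s) is invertible, every row sum of M(p^s)⁻¹ equals −p^{1−s}, and the sum of all entries of M(p^s)⁻¹ equals −p. -/

import Mathlib

/-!
The off-diagonal entries of row `i` of `M(p^s)` are `p^{2ν_p(d)}`, where `d` runs over the nonzero
residues modulo `p^s`, and these sum to `p^{s-1}(p^s - 1)` (split off the multiples of `p` and
induct on `s`). Hence every row of `M(p^s)` sums to `-p^{s-1}`, and `M(p^s)` is strictly
diagonally dominant, so invertible by Gershgorin. The all-ones vector is then an eigenvector of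
`M(p^s)⁻¹` with eigenvalue `-p^{1-s}`.
-/

/-- `M(p^s)`: the `p^s × p^s` matrix over `ℚ` whose `(i,j)` entry is `−p^{2s−1}` if `i = j`
and `p^{2ν_p(i−j)}` otherwise, where `ν_p` is the `p`-adic valuation. -/
def Mpr (p s : ℕ) : Matrix (Fin (p ^ s)) (Fin (p ^ s)) ℚ := fun i j =>
  if i = j then -(p : ℚ) ^ (2 * s - 1)
  else (p : ℚ) ^ (2 * padicValInt p ((i : ℤ) - (j : ℤ)))

open Finset Matrix

theorem padicValInt_eq_of_dvd_sub {p s : ℕ} [Fact p.Prime] {a b : ℤ}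
    (hab : (p : ℤ) ^ s ∣ a - b) (hb : ¬ (p : ℤ) ^ s ∣ b) :
    padicValInt p a = padicValInt p b := by
  have dvd_iff {t : ℕ} (ht : t ≤ s) : (p : ℤ) ^ t ∣ a ↔ (p : ℤ) ^ t ∣ b :=
    Int.dvd_iff_dvd_of_dvd_sub ((pow_dvd_pow _ ht).trans hab)
  have hb0 : b ≠ 0 := by rintro rfl; exact hb (dvd_zero _)
  have ha0 : a ≠ 0 := by rintro rfl; exact hb ((dvd_iff le_rfl).1 (dvd_zero _))
  have hbs : padicValInt p b < s := by
    by_contra! h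
    exact hb ((padicValInt_dvd_iff s b).2 (Or.inr h))
  refine le_antisymm (not_lt.1 fun h => ?_) ?_
  · have : (p : ℤ) ^ (padicValInt p b + 1) ∣ b :=
      (dvd_iff hbs).1 ((padicValInt_dvd_iff _ a).2 (Or.inr h))
    simpa [hb0] using (padicValInt_dvd_iff _ b).1 this
  · have : (p : ℤ) ^ padicValInt p b ∣ a := (dvd_iff hbs.le).2 (padicValInt_dvd b)
    simpa [ha0] using (padicValInt_dvd_iff _ a).1 this

theorem Fin.val_sub_modEq {N : ℕ} (i j : Fin N) :
    ((i - j : Fin N) : ℤ) ≡ i - j [ZMOD N] := by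
  rcases le_or_gt j i with h | h
  · rw [Fin.coe_sub_iff_le.2 h, Nat.cast_sub h]
  · rw [Fin.coe_sub_iff_lt.2 h, Nat.cast_sub (by omega), Int.modEq_iff_dvd]
    exact ⟨-1, by push_cast; ring⟩

theorem sum_Ico_one_mul_pow_padicValNat {R : Type*} [CommRing R] (p : ℕ) [hp : Fact p.Prime]
    (c : R) (n : ℕ) :
    ∑ k ∈ Ico 1 (p * n), c ^ padicValNat p k =
      c * ∑ k ∈ Ico 1 n, c ^ padicValNat p k + ((p * n - n : ℕ) : R) := by
  have hp0 : p ≠ 0 := hp.out.ne_zero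
  rcases Nat.eq_zero_or_pos n with rfl | hn
  · simp
  have hmul : (Ico 1 (p * n)).filter (p ∣ ·) =
      (Ico 1 n).map ⟨(p * ·), mul_right_injective₀ hp0⟩ := by
    ext k
    simp only [mem_filter, mem_Ico, mem_map, Function.Embedding.coeFn_mk]
    constructor
    · rintro ⟨⟨h1, h2⟩, m, rfl⟩
      exact ⟨m, ⟨Nat.pos_of_mul_pos_left h1, lt_of_mul_lt_mul_left h2 (Nat.zero_le p)⟩, rfl⟩
    · rintro ⟨m, ⟨h1, h2⟩, rfl⟩
      exact ⟨⟨Nat.mul_pos hp.out.pos h1, Nat.mul_lt_mul_of_pos_left h2 hp.out.pos⟩,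
        dvd_mul_right p m⟩
  rw [← sum_filter_add_sum_filter_not _ (p ∣ ·), hmul, sum_map, mul_sum]
  congr 1
  · refine sum_congr rfl fun m hm => ?_
    have hm0 : m ≠ 0 := Nat.one_le_iff_ne_zero.1 (mem_Ico.1 hm).1
    rw [Function.Embedding.coeFn_mk, padicValNat.mul hp0 hm0, padicValNat.self hp.out.one_lt,
      pow_add, pow_one]
  · rw [sum_congr rfl fun k hk => by
      rw [padicValNat.eq_zero_of_not_dvd (mem_filter.1 hk).2, pow_zero], sum_const, nsmul_one]
    have hcard := card_filter_add_card_filter_not (s := Ico 1 (p * n)) (p := (p ∣ ·))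
    rw [hmul, card_map, Nat.card_Ico, Nat.card_Ico] at hcard
    have : n ≤ p * n := Nat.le_mul_of_pos_left n (Nat.pos_of_ne_zero hp0)
    congr 1
    omega

theorem mul_sum_Ico_one_pow_padicValNat (p : ℕ) [hp : Fact p.Prime] (s : ℕ) :
    (p : ℚ) * ∑ k ∈ Ico 1 (p ^ s), (p : ℚ) ^ (2 * padicValNat p k) =
      (p : ℚ) ^ s * ((p : ℚ) ^ s - 1) := by
  simp_rw [pow_mul]
  induction s with
  | zero => simp
  | succ s ih =>
    have hle : p ^ s ≤ p * p ^ s := Nat.le_mul_of_pos_left _ hp.out.pos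
    rw [pow_succ', sum_Ico_one_mul_pow_padicValNat, Nat.cast_sub hle]
    push_cast
    linear_combination (p : ℚ) ^ 2 * ih

namespace Mpr

variable {p s : ℕ} [Fact p.Prime]

theorem apply_sub_of_ne_zero (i d : Fin (p ^ s)) (hd : d ≠ 0) :
    Mpr p s i (i - d) = (p : ℚ) ^ (2 * padicValNat p d) := by
  have hne : i ≠ i - d := fun h => hd (sub_eq_self.1 h.symm)
  have hdvd := (Fin.val_sub_modEq i (i - d)).dvd
  rw [sub_sub_cancel, Nat.cast_pow] at hdvd
  have hval : padicValInt p ((i : ℤ) - (i - d : Fin (p ^ s))) = padicValNat p d := by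
    rw [padicValInt_eq_of_dvd_sub hdvd, padicValInt.of_nat]
    exact_mod_cast Nat.not_dvd_of_pos_of_lt (Fin.pos_iff_ne_zero.2 hd) d.isLt
  rw [Mpr, if_neg hne, hval]

theorem sum_row_erase (i : Fin (p ^ s)) :
    ∑ j ∈ univ.erase i, Mpr p s i j =
      ∑ k ∈ Ico 1 (p ^ s), (p : ℚ) ^ (2 * padicValNat p k) := by
  refine sum_bij' (fun j _ => ((i - j : Fin (p ^ s)) : ℕ))
    (fun k hk => i - ⟨k, (mem_Ico.1 hk).2⟩) (fun j hj => ?_) (fun k hk => ?_)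
    (fun j _ => by simp) (fun k _ => by simp) (fun j hj => ?_)
  · have : i - j ≠ 0 := sub_ne_zero.2 (ne_of_mem_erase hj).symm
    exact mem_Ico.2 ⟨Fin.pos_iff_ne_zero.2 this, (i - j).isLt⟩
  · refine mem_erase.2 ⟨fun h => ?_, mem_univ _⟩
    have := congrArg Fin.val (sub_eq_self.1 h)
    simp only [Fin.val_zero] at this
    exact absurd (mem_Ico.1 hk).1 (by omega)
  · have hd : i - j ≠ 0 := sub_ne_zero.2 (ne_of_mem_erase hj).symm
    simpa using apply_sub_of_ne_zero i (i - j) hd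

theorem sum_row (hs : 1 ≤ s) (i : Fin (p ^ s)) :
    ∑ j, Mpr p s i j = -(p : ℚ) ^ ((s : ℤ) - 1) := by
  obtain ⟨t, rfl⟩ : ∃ t, s = t + 1 := ⟨s - 1, by omega⟩
  have hS := mul_sum_Ico_one_pow_padicValNat p (t + 1)
  rw [← add_sum_erase _ _ (mem_univ i), sum_row_erase, Mpr, if_pos rfl,
    show 2 * (t + 1) - 1 = 2 * t + 1 by omega, Nat.cast_add_one, add_sub_cancel_right,
    zpow_natCast]
  refine mul_left_cancel₀ (Nat.cast_ne_zero.2 (Fact.out : p.Prime).ne_zero) ?_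
  linear_combination hS

theorem det_ne_zero : (Mpr p s).det ≠ 0 := by
  refine det_ne_zero_of_sum_row_lt_diag fun i => ?_
  have hp : (1 : ℚ) ≤ p := Nat.one_le_cast.2 (Fact.out : p.Prime).one_le
  have hoff (j) (hj : j ∈ univ.erase i) : ‖Mpr p s i j‖ = (Mpr p s i j : ℝ) := by
    have hpos : 0 < Mpr p s i j := by
      rw [Mpr, if_neg (ne_of_mem_erase hj).symm]
      positivity
    rw [← Rat.norm_cast_real, Real.norm_of_nonneg (Rat.cast_nonneg.2 hpos.le)]
  have hdiag : ‖Mpr p s i i‖ = (((p : ℚ) ^ (2 * s - 1) : ℚ) : ℝ) := by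
    rw [Mpr, if_pos rfl, norm_neg, ← Rat.norm_cast_real, Real.norm_of_nonneg (by positivity)]
  rw [sum_congr rfl hoff, ← Rat.cast_sum, sum_row_erase, hdiag, Rat.cast_lt]
  refine lt_of_mul_lt_mul_left ?_ (zero_le_one.trans hp)
  calc (p : ℚ) * ∑ k ∈ Ico 1 (p ^ s), (p : ℚ) ^ (2 * padicValNat p k)
      = (p : ℚ) ^ (2 * s) - (p : ℚ) ^ s := by
        rw [mul_sum_Ico_one_pow_padicValNat]; ring
    _ < (p : ℚ) ^ (2 * s) := sub_lt_self _ (by positivity)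
    _ ≤ (p : ℚ) * (p : ℚ) ^ (2 * s - 1) := by
        rw [← pow_succ']; exact pow_le_pow_right₀ hp (by omega)

end Mpr

theorem Matrix.sum_inv_row_of_sum_row {n K : Type*} [Fintype n] [DecidableEq n] [Field K]
    {A : Matrix n n K} (hA : IsUnit A.det) {c : K} (h : ∀ i, ∑ j, A i j = c) (i : n) :
    ∑ j, A⁻¹ i j = c⁻¹ := by
  have hA1 : A *ᵥ (fun _ => 1) = c • fun _ => 1 := by
    ext i
    simp [mulVec, dotProduct, h]
  have h1 : A⁻¹ *ᵥ (A *ᵥ fun _ => 1) = fun _ => 1 := by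
    rw [mulVec_mulVec, nonsing_inv_mul _ hA, one_mulVec]
  rw [hA1, mulVec_smul] at h1
  have := congrFun h1 i
  simp only [Pi.smul_apply, mulVec, dotProduct, mul_one, smul_eq_mul] at this
  exact eq_inv_of_mul_eq_one_right this

/-- For a prime `p` and `s ≥ 1`, `M(p^s)` is invertible over `ℚ`, every row
sum of `M(p^s)⁻¹` equals `−p^{1−s}`, and the sum of all entries of `M(p^s)⁻¹` equals `−p`. -/
theorem stmt13 (p s : ℕ) (hp : p.Prime) (hs : 1 ≤ s) :
    IsUnit (Mpr p s) ∧
    (∀ i : Fin (p ^ s), ∑ j : Fin (p ^ s), (Mpr p s)⁻¹ i j = -(p : ℚ) ^ (1 - (s : ℤ))) ∧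
    (∑ i : Fin (p ^ s), ∑ j : Fin (p ^ s), (Mpr p s)⁻¹ i j = -(p : ℚ)) := by
  have : Fact p.Prime := ⟨hp⟩
  have hdet : IsUnit (Mpr p s).det := isUnit_iff_ne_zero.2 Mpr.det_ne_zero
  have hrow (i : Fin (p ^ s)) : ∑ j, (Mpr p s)⁻¹ i j = -(p : ℚ) ^ (1 - (s : ℤ)) := by
    rw [sum_inv_row_of_sum_row hdet (Mpr.sum_row hs) i, inv_neg, ← _root_.zpow_neg, neg_sub]
  refine ⟨(isUnit_iff_isUnit_det _).2 hdet, hrow, ?_⟩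
  rw [sum_congr rfl fun i _ => hrow i, sum_const, card_univ, Fintype.card_fin, nsmul_eq_mul,
    Nat.cast_pow, mul_neg, ← zpow_natCast, ← zpow_add₀ (Nat.cast_ne_zero.2 hp.ne_zero),
    add_sub_cancel, zpow_one]
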